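/- The number of ordered pairs of distinct cells ((i,x),(j,y)) in an N×N grid with j > i that lie on a common diagonal (i.e., |i−j| = |x−y|) equals N²(N−1) − N(N−1) − N(N−1)(N−2)/3. -/

import Mathlib

/-!
Split the pairs by their row gap `d = j - i`, which ranges over `1, …, N - 1`. The rows `(i, j)`
with gap `d` number `N - d`, and the columns `(x, y)` with `|x - y| = d` number `2 (N - d)`,
independently of each other. Hence the count is `∑_{d=1}^{N-1} 2 (N - d)² = 2 ∑_{t<N} t²`,
and the closed form follows from the sum of squares.
-/

open Finset

def pairsWithGap (N d : ℕ) : Finset (Fin N × Fin N) := {p | (p.2 : ℕ) = p.1 + d}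

def pairsAtDistance (N d : ℕ) : Finset (Fin N × Fin N) := {p | ((p.1 : ℤ) - p.2).natAbs = d}

lemma card_pairsWithGap (N d : ℕ) : #(pairsWithGap N d) = N - d := by
  calc #(pairsWithGap N d) = #{a : Fin N | (a : ℕ) < N - d} := by
        refine card_bij (fun p _ => p.1) ?_ ?_ ?_ <;> simp only [pairsWithGap, mem_filter_univ]
        · intro p hp
          omega
        · intro p hp q hq hpq
          ext <;> omega
        · intro a ha
          exact ⟨(a, ⟨a + d, by omega⟩), rfl, rfl⟩
    _ = N - d := by rw [Fin.card_filter_val_lt]; omega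

lemma pairsAtDistance_eq_union (N d : ℕ) :
    pairsAtDistance N d =
      pairsWithGap N d ∪ (pairsWithGap N d).map (Equiv.prodComm _ _).toEmbedding := by
  ext p
  simp only [pairsAtDistance, pairsWithGap, mem_filter_univ, mem_union,
    mem_map_equiv, Equiv.prodComm_symm, Equiv.prodComm_apply, Prod.snd_swap, Prod.fst_swap]
  omega

lemma card_pairsAtDistance (N : ℕ) {d : ℕ} (hd : d ≠ 0) :
    #(pairsAtDistance N d) = 2 * (N - d) := by
  have hdisj : Disjoint (pairsWithGap N d)
      ((pairsWithGap N d).map (Equiv.prodComm _ _).toEmbedding) := by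
    rw [disjoint_left]
    simp only [pairsWithGap, mem_filter_univ, mem_map_equiv, Equiv.prodComm_symm,
      Equiv.prodComm_apply, Prod.snd_swap, Prod.fst_swap, Prod.forall]
    omega
  rw [pairsAtDistance_eq_union, card_union_of_disjoint hdisj, card_map, card_pairsWithGap, two_mul]

def diagonalPairs (N : ℕ) : Finset ((Fin N × Fin N) × (Fin N × Fin N)) :=
  {p | p.1.1 < p.2.1 ∧
    ((p.1.1 : ℤ) - (p.2.1 : ℤ)).natAbs = ((p.1.2 : ℤ) - (p.2.2 : ℤ)).natAbs}

lemma card_diagonalPairs_filter_gap_eq (N : ℕ) {d : ℕ} (hd : d ≠ 0) :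
    #{p ∈ diagonalPairs N | (p.2.1 : ℕ) - p.1.1 = d} = 2 * (N - d) ^ 2 := by
  rw [card_equiv (Equiv.prodProdProdComm _ _ _ _) (t := pairsWithGap N d ×ˢ pairsAtDistance N d),
    card_product, card_pairsWithGap, card_pairsAtDistance N hd]
  · ring
  · simp only [diagonalPairs, pairsWithGap, pairsAtDistance, mem_filter, mem_univ, true_and,
      mem_product, Equiv.prodProdProdComm_apply, Fin.lt_def]
    omega

lemma card_diagonalPairs_eq_sum (N : ℕ) :
    #(diagonalPairs N) = ∑ d ∈ Ico 1 N, 2 * (N - d) ^ 2 := by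
  have hgap : Set.MapsTo (fun p : (Fin N × Fin N) × (Fin N × Fin N) => (p.2.1 : ℕ) - p.1.1)
      (diagonalPairs N) (Ico 1 N) := by
    intro p hp
    simp only [diagonalPairs, coe_filter, mem_univ, true_and, Set.mem_ofPred_eq, Fin.lt_def] at hp
    simp only [coe_Ico, Set.mem_Ico]
    omega
  rw [card_eq_sum_card_fiberwise hgap]
  exact sum_congr rfl fun d hd => card_diagonalPairs_filter_gap_eq N (by rw [mem_Ico] at hd; omega)

lemma sum_Ico_one_sq_mul_six (n : ℕ) :
    (∑ i ∈ Ico 1 (n + 1), i ^ 2) * 6 = n * (n + 1) * (2 * n + 1) := by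
  induction n with
  | zero => simp
  | succ n ih => rw [sum_Ico_succ_top (by omega), add_mul, ih]; ring

lemma three_dvd_mul_sub_one_mul_sub_two (n : ℕ) : 3 ∣ n * (n - 1) * (n - 2) := by
  have := dvd_trans (by decide : 3 ∣ Nat.factorial 3) (Nat.factorial_dvd_descFactorial n 3)
  simpa [Nat.descFactorial, mul_comm, mul_left_comm, mul_assoc] using this

lemma sum_Ico_two_mul_sub_sq (N : ℕ) :
    ∑ d ∈ Ico 1 N, 2 * (N - d) ^ 2
      = N ^ 2 * (N - 1) - N * (N - 1) - N * (N - 1) * (N - 2) / 3 := by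
  rw [sum_Ico_reflect (fun j => 2 * j ^ 2) 1 N.le_succ, Nat.add_sub_cancel_left,
    Nat.add_sub_cancel, ← mul_sum]
  rcases N with _ | _ | k
  · simp
  · simp
  · obtain ⟨q, hq⟩ := three_dvd_mul_sub_one_mul_sub_two (k + 2)
    have hsq := sum_Ico_one_sq_mul_six (k + 1)
    set S := ∑ i ∈ Ico 1 (k + 2), i ^ 2
    change (k + 2) * (k + 1) * k = 3 * q at hq
    change 2 * S = (k + 2) ^ 2 * (k + 1) - (k + 2) * (k + 1) - (k + 2) * (k + 1) * k / 3
    -- linear in the atoms `(k + 2) * (k + 1) * k` and `(k + 2) * (k + 1)`, so `omega` applies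
    have e1 : (k + 2) ^ 2 * (k + 1) = (k + 2) * (k + 1) * k + 2 * ((k + 2) * (k + 1)) := by ring
    have e2 : (k + 1) * (k + 1 + 1) * (2 * (k + 1) + 1) =
        2 * ((k + 2) * (k + 1) * k) + 3 * ((k + 2) * (k + 1)) := by ring
    rw [e1]
    rw [e2] at hsq
    omega

theorem card_diagonal_pairs (N : ℕ) :
    ((Finset.univ : Finset ((Fin N × Fin N) × (Fin N × Fin N))).filter
        fun p => p.1.1 < p.2.1 ∧
          ((p.1.1 : ℤ) - (p.2.1 : ℤ)).natAbs = ((p.1.2 : ℤ) - (p.2.2 : ℤ)).natAbs).card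
      = N ^ 2 * (N - 1) - N * (N - 1) - N * (N - 1) * (N - 2) / 3 :=
  (card_diagonalPairs_eq_sum N).trans (sum_Ico_two_mul_sub_sq N)
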